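/- arXiv:2410.16233 — 3 statements merged into one kernel-verified Lean document; each statement's English description precedes it below -/
import Mathlib

section
/- The number of isomorphism classes of (simple, undirected) graphs on n vertices is asymptotically (1 + o(1)) · 2^{n(n-1)/2} / n! as n → ∞. That is, for every ε > 0 there exists n₀ such that for all n ≥ n₀, the number of isomorphism classes of graphs on n vertices lies between (1 - ε) · 2^{n(n-1)/2} / n! and (1 + ε) · 2^{n(n-1)/2} / n!. -/
/-!
By Burnside's lemma, `n!` times the number of isomorphism classes is `∑ σ, |Fix σ|`, and the
identity alone contributes all `2 ^ N` graphs, `N = n.choose 2`. A graph fixed by `σ` is a labelling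
of the edges of `K_n` constant on the cycles of the permutation `σ` induces on them, so
`|Fix σ| ≤ 2 ^ c`, where `2 c ≤ N + #(edges fixed by σ)`. If `σ` moves `m` vertices, at least
`m (n - 2) / 2` edges are moved, which gives `|Fix σ| ≤ 2 ^ N θ ^ (m (n - 2))` with `θ ^ 4 = 1 / 2`.
As at most `n ^ (2 m)` permutations move exactly `m` vertices, the non-identity terms add up to
at most `2 ^ N n (n ^ 2 θ ^ (n - 2)) ^ 2 = o(2 ^ N)`.
-/

open SimpleGraph

/-- Graphs on `n` vertices up to isomorphism. -/
def graphSetoid (n : ℕ) : Setoid (SimpleGraph (Fin n)) where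
  r G H := Nonempty (G ≃g H)
  iseqv := ⟨fun _ => ⟨Iso.refl⟩, fun ⟨e⟩ => ⟨e.symm⟩, fun ⟨e⟩ ⟨f⟩ => ⟨e.trans f⟩⟩

open Finset MulAction Equiv Filter Topology

namespace Equiv.Perm

variable {α : Type*}

theorem SameCycle.apply_eq_of_forall_apply_eq {β : Type*} {f : Perm α} {χ : α → β}
    (hχ : ∀ x, χ (f x) = χ x) {x y : α} (h : SameCycle f x y) : χ x = χ y := by
  obtain ⟨i, rfl⟩ := h
  induction i using Int.induction_on with
  | zero => rfl
  | succ i ih => rw [ih, add_comm, zpow_one_add, mul_apply, hχ]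
  | pred i ih =>
    rw [ih, ← hχ ((f ^ (-(i : ℤ) - 1)) x), ← mul_apply, ← zpow_one_add, add_sub_cancel]

theorem card_invariant_fun_le {β : Type*} [Finite α] [Finite β] (f : Perm α) :
    Nat.card {χ : α → β // ∀ x, χ (f x) = χ x}
      ≤ Nat.card β ^ Nat.card (Quotient (SameCycle.setoid f)) := by
  rw [← Nat.card_fun]
  refine Nat.card_le_card_of_injective (fun χ q => χ.1 q.out) fun χ ψ h =>
    Subtype.ext (funext fun x => ?_)
  have hx : SameCycle f (⟦x⟧ : Quotient (SameCycle.setoid f)).out x :=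
    Quotient.mk_out (s := SameCycle.setoid f) x
  rw [← hx.apply_eq_of_forall_apply_eq χ.2, ← hx.apply_eq_of_forall_apply_eq ψ.2]
  exact congrFun h ⟦x⟧

variable [Fintype α] [DecidableEq α]

theorem two_mul_card_quotient_sameCycle_add_card_support_le (f : Perm α) :
    2 * Nat.card (Quotient (SameCycle.setoid f)) + #f.support ≤ 2 * Fintype.card α := by
  classical
  -- a fixed point is a cycle of its own, every other cycle has at least two moved elements
  let π : α → Quotient (SameCycle.setoid f) := Quotient.mk _
  have fiber : ∀ q, 2 + #{x ∈ f.support | π x = q} ≤ 2 * #{x | π x = q} := by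
    refine Quotient.ind fun a => ?_
    change 2 + #{x ∈ f.support | π x = π a} ≤ 2 * #{x | π x = π a}
    by_cases ha : f a = a
    · have hq : ∀ x, π x = π a → x = a := fun x hx =>
        ((Quotient.exact hx).symm.eq_of_left ha).symm
      have hfiber : ({x | π x = π a} : Finset α) = {a} := by
        ext x; simp only [mem_filter, mem_univ, true_and, mem_singleton]
        exact ⟨hq x, fun h => h ▸ rfl⟩
      have hmoved : ({x ∈ f.support | π x = π a} : Finset α) = ∅ := by
        ext x; simp only [mem_filter, mem_support, notMem_empty, iff_false, not_and]
        intro hx hxa; exact hx (hq x hxa ▸ ha)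
      rw [hfiber, hmoved, card_singleton, card_empty]
    · have hpair : {a, f a} ⊆ ({x | π x = π a} : Finset α) := by
        intro x hx
        simp only [mem_insert, mem_singleton] at hx
        rcases hx with rfl | rfl
        · simp
        · simpa using Quotient.sound (sameCycle_apply_left.mpr (SameCycle.refl f a))
      have htwo := (card_pair (Ne.symm ha)).symm.le.trans (card_le_card hpair)
      have hmoved := card_le_card
        (filter_subset_filter (fun x => π x = π a) (subset_univ f.support))
      omega
  calc 2 * Nat.card (Quotient (SameCycle.setoid f)) + #f.support
      = ∑ q, (2 + #{x ∈ f.support | π x = q}) := by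
        rw [sum_add_distrib, ← card_eq_sum_card_fiberwise (fun x _ => mem_univ (π x)),
          Nat.card_eq_fintype_card, sum_const, card_univ, smul_eq_mul, mul_comm]
    _ ≤ ∑ q, 2 * #{x | π x = q} := sum_le_sum fun q _ => fiber q
    _ = 2 * Fintype.card α := by
        rw [← mul_sum, ← card_eq_sum_card_fiberwise (fun x _ => mem_univ (π x)), card_univ]

theorem card_filter_card_support_eq_le (j : ℕ) :
    #{σ : Perm α | #σ.support = j} ≤ (Fintype.card α ^ 2) ^ j := by
  let graph (σ : Perm α) : Finset (α × α) := σ.support.image fun x => (x, σ x)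
  have mem_graph {σ : Perm α} {x : α} (hx : σ x ≠ x) (τ : Perm α) (h : graph σ = graph τ) :
      σ x = τ x := by
    have : (x, σ x) ∈ graph τ := h ▸ mem_image_of_mem _ (mem_support.mpr hx)
    obtain ⟨y, -, hy⟩ := mem_image.mp this
    simp only [Prod.mk.injEq] at hy
    rw [← hy.2, hy.1]
  calc #{σ : Perm α | #σ.support = j}
      ≤ #(powersetCard j (univ : Finset (α × α))) := by
        refine card_le_card_of_injOn graph (fun σ hσ => ?_) fun σ _ τ _ h => ?_
        · rw [mem_coe, mem_powersetCard_univ,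
            card_image_of_injective _ fun x y h => congrArg Prod.fst h]
          exact (mem_filter.mp hσ).2
        · ext x
          by_cases hσ : σ x = x
          · by_cases hτ : τ x = x
            · rw [hσ, hτ]
            · exact (mem_graph hτ σ h.symm).symm
          · exact mem_graph hσ τ h
    _ ≤ (Fintype.card α ^ 2) ^ j := by
        rw [card_powersetCard, card_univ, Fintype.card_prod, ← sq]
        exact Nat.choose_le_pow _ _

theorem sum_pow_card_support_le {y : ℝ} (hy : 0 ≤ y) (h : (Fintype.card α : ℝ) ^ 2 * y ≤ 1) :
    ∑ σ ∈ univ.erase (1 : Perm α), y ^ #σ.support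
      ≤ Fintype.card α * ((Fintype.card α : ℝ) ^ 2 * y) ^ 2 := by
  set n := Fintype.card α
  have hmaps : ∀ σ ∈ univ.erase (1 : Perm α), #σ.support ∈ Icc 2 n := fun σ hσ =>
    mem_Icc.mpr ⟨one_lt_card_support_of_ne_one (ne_of_mem_erase hσ), card_le_univ _⟩
  calc ∑ σ ∈ univ.erase (1 : Perm α), y ^ #σ.support
      = ∑ j ∈ Icc 2 n, ∑ σ ∈ univ.erase (1 : Perm α) with #σ.support = j, y ^ j := by
        rw [sum_fiberwise_of_maps_to' hmaps]
    _ ≤ ∑ j ∈ Icc 2 n, ((n : ℝ) ^ 2 * y) ^ 2 := by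
        refine sum_le_sum fun j hj => ?_
        rw [sum_const, nsmul_eq_mul]
        calc (#{σ ∈ univ.erase (1 : Perm α) | #σ.support = j} : ℝ) * y ^ j
            ≤ ((n ^ 2) ^ j : ℕ) * y ^ j := by
              gcongr
              exact (card_le_card (filter_subset_filter _ (erase_subset _ _))).trans
                (card_filter_card_support_eq_le j)
          _ = ((n : ℝ) ^ 2 * y) ^ j := by push_cast; rw [mul_pow]
          _ ≤ ((n : ℝ) ^ 2 * y) ^ 2 :=
              pow_le_pow_of_le_one (by positivity) h (mem_Icc.mp hj).1
    _ ≤ n * ((n : ℝ) ^ 2 * y) ^ 2 := by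
        rw [sum_const, nsmul_eq_mul, Nat.card_Icc]
        gcongr
        exact_mod_cast Nat.sub_le_of_le_add (by omega)

end Equiv.Perm

namespace SimpleGraph

variable {V : Type*}

instance : MulAction (Perm V) (SimpleGraph V) where
  smul σ G := G.comap σ.symm
  one_smul _ := rfl
  mul_smul _ _ _ := rfl

theorem perm_smul_adj (σ : Perm V) (G : SimpleGraph V) (u v : V) :
    (σ • G).Adj u v ↔ G.Adj (σ⁻¹ u) (σ⁻¹ v) := Iff.rfl

theorem nonempty_iso_iff_mem_orbit {G H : SimpleGraph V} :
    Nonempty (G ≃g H) ↔ G ∈ orbit (Perm V) H := by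
  refine ⟨fun ⟨f⟩ => ⟨f.toEquiv.symm, ?_⟩, fun ⟨σ, hσ⟩ => ⟨hσ ▸ Iso.comap σ.symm H⟩⟩
  exact f.toEmbedding.comap_eq

def topEdgePerm (σ : Perm V) : Perm (⊤ : SimpleGraph V).edgeSet :=
  (Iso.completeGraph σ).mapEdgeSet

@[simp]
theorem coe_topEdgePerm_apply (σ : Perm V) (e : (⊤ : SimpleGraph V).edgeSet) :
    (topEdgePerm σ e : Sym2 V) = e.1.map σ := rfl

def edgeIndicatorEquiv : SimpleGraph V ≃ ((⊤ : SimpleGraph V).edgeSet → Prop) where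
  toFun G e := e.1 ∈ G.edgeSet
  invFun χ := fromEdgeSet {e | ∃ h, χ ⟨e, h⟩}
  left_inv G := by
    ext u v
    simp only [fromEdgeSet_adj, Set.mem_ofPred_eq, mem_edgeSet, top_adj]
    exact ⟨fun h => h.1.2, fun h => ⟨⟨h.ne, h⟩, h.ne⟩⟩
  right_inv χ := by
    funext ⟨e, he⟩
    simp only [edgeSet_fromEdgeSet, Set.mem_sdiff, Set.mem_ofPred_eq]
    exact propext ⟨fun h => h.1.2, fun h => ⟨⟨he, h⟩, by simpa using he⟩⟩

theorem map_mem_edgeSet_iff_of_smul_eq {σ : Perm V} {G : SimpleGraph V} (hG : σ • G = G)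
    (e : Sym2 V) : e.map σ ∈ G.edgeSet ↔ e ∈ G.edgeSet := by
  induction e using Sym2.ind with
  | _ a b =>
    rw [Sym2.map_mk, mem_edgeSet, mem_edgeSet]
    conv_lhs => rw [← hG]
    simp [perm_smul_adj]

theorem card_fixedBy_le_two_pow [Finite V] (σ : Perm V) :
    Nat.card (fixedBy (SimpleGraph V) σ)
      ≤ 2 ^ Nat.card (Quotient (Perm.SameCycle.setoid (topEdgePerm σ))) := by
  calc Nat.card (fixedBy (SimpleGraph V) σ)
      ≤ Nat.card {χ : (⊤ : SimpleGraph V).edgeSet → Prop // ∀ e, χ (topEdgePerm σ e) = χ e} :=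
        Nat.card_le_card_of_injective
          (fun G => ⟨edgeIndicatorEquiv G.1,
            fun e => propext (map_mem_edgeSet_iff_of_smul_eq G.2 e)⟩)
          fun G H h => Subtype.ext (edgeIndicatorEquiv.injective (congrArg Subtype.val h))
    _ ≤ 2 ^ Nat.card (Quotient (Perm.SameCycle.setoid (topEdgePerm σ))) := by
        simpa [Nat.card_eq_fintype_card (α := Prop), Fintype.card_prop] using
          Perm.card_invariant_fun_le (β := Prop) (topEdgePerm σ)

variable [Fintype V] [DecidableEq V]

theorem card_simpleGraph : Nat.card (SimpleGraph V) = 2 ^ (Fintype.card V).choose 2 := by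
  rw [Nat.card_congr edgeIndicatorEquiv, Nat.card_fun, Nat.card_eq_fintype_card (α := Prop),
    Fintype.card_prop, Nat.card_eq_fintype_card, ← edgeFinset_card,
    card_edgeFinset_top_eq_card_choose_two]

/- A vertex `x` moved by `σ` lies on `n - 1` edges, of which only `s(x, σ x)` can be fixed,
and every edge has two ends. -/
theorem card_support_mul_le_card_support_topEdgePerm_mul_two (σ : Perm V) :
    #σ.support * (Fintype.card V - 2) ≤ #(topEdgePerm σ).support * 2 := by
  refine card_mul_le_card_mul (fun x (e : (⊤ : SimpleGraph V).edgeSet) => x ∈ e.1)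
    (fun x hx => ?_) fun e _ => ?_
  · have hx : σ x ≠ x := Perm.mem_support.mp hx
    let edge (y : ({x, σ x}ᶜ : Finset V)) : (⊤ : SimpleGraph V).edgeSet :=
      ⟨s(x, y), (top_adj _ _).mpr fun h =>
        mem_compl.mp y.2 (by rw [← show x = y from h]; exact mem_insert_self _ _)⟩
    calc Fintype.card V - 2 = #({x, σ x}ᶜ : Finset V) := by
          rw [card_compl, card_pair hx.symm]
      _ = #(univ.image edge) := by
          rw [card_image_of_injective _ fun y z h => Subtype.ext
            (Sym2.congr_right.mp (congrArg Subtype.val h)), card_univ, Fintype.card_coe]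
      _ ≤ _ := by
          refine card_le_card fun e he => ?_
          obtain ⟨⟨y, hy⟩, -, rfl⟩ := mem_image.mp he
          simp only [mem_compl, mem_insert, mem_singleton, not_or] at hy
          refine mem_filter.mpr ⟨Perm.mem_support.mpr fun h => ?_, Sym2.mem_mk_left x y⟩
          have := congrArg Subtype.val h
          simp only [edge, coe_topEdgePerm_apply, Sym2.map_mk, Sym2.eq_iff] at this
          tauto
  · obtain ⟨e, he⟩ := e
    induction e using Sym2.ind with
    | _ a b =>
      refine (card_le_card fun x hx => ?_).trans (card_le_two (a := a) (b := b))
      simpa [Sym2.mem_iff] using (mem_filter.mp hx).2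

theorem card_fixedBy_le {θ : ℝ} (hθ0 : 0 ≤ θ) (hθ : θ ^ 4 = 1 / 2) (σ : Perm V) :
    (Nat.card (fixedBy (SimpleGraph V) σ) : ℝ)
      ≤ 2 ^ (Fintype.card V).choose 2 * θ ^ ((Fintype.card V - 2) * #σ.support) := by
  set N := (Fintype.card V).choose 2
  set c := Nat.card (Quotient (Perm.SameCycle.setoid (topEdgePerm σ)))
  have hcycles := Perm.two_mul_card_quotient_sameCycle_add_card_support_le (topEdgePerm σ)
  have hmoved := card_support_mul_le_card_support_topEdgePerm_mul_two σ
  rw [← edgeFinset_card, card_edgeFinset_top_eq_card_choose_two] at hcycles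
  have hcN : c ≤ N := by omega
  have hexp : (Fintype.card V - 2) * #σ.support ≤ 4 * (N - c) := by
    rw [mul_comm]; omega
  have hθ1 : θ ≤ 1 := (pow_le_one_iff_of_nonneg hθ0 four_ne_zero).mp (by rw [hθ]; norm_num)
  calc (Nat.card (fixedBy (SimpleGraph V) σ) : ℝ)
      ≤ 2 ^ c := by exact_mod_cast card_fixedBy_le_two_pow σ
    _ = 2 ^ N * θ ^ (4 * (N - c)) := by
        rw [pow_mul, hθ, one_div_pow, ← Nat.sub_add_cancel hcN, pow_add, Nat.add_sub_cancel]
        field_simp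
    _ ≤ 2 ^ N * θ ^ ((Fintype.card V - 2) * #σ.support) :=
        mul_le_mul_of_nonneg_left (pow_le_pow_of_le_one hθ0 hθ1 hexp) (by positivity)

theorem card_quotient_orbitRel_mul_factorial :
    Nat.card (Quotient (orbitRel (Perm V) (SimpleGraph V))) * (Fintype.card V).factorial
      = ∑ σ : Perm V, Nat.card (fixedBy (SimpleGraph V) σ) := by
  classical
  let _ := fun σ : Perm V => Fintype.ofFinite (fixedBy (SimpleGraph V) σ)
  let _ := Fintype.ofFinite (Quotient (orbitRel (Perm V) (SimpleGraph V)))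
  simp only [Nat.card_eq_fintype_card]
  rw [sum_card_fixedBy_eq_card_orbits_mul_card_group, Fintype.card_perm]

theorem two_pow_le_card_quotient_orbitRel_mul_factorial :
    2 ^ (Fintype.card V).choose 2
      ≤ Nat.card (Quotient (orbitRel (Perm V) (SimpleGraph V))) * (Fintype.card V).factorial := by
  rw [card_quotient_orbitRel_mul_factorial, ← card_simpleGraph, ← Nat.card_univ,
    ← fixedBy_one_eq_univ (SimpleGraph V) (Perm V)]
  exact single_le_sum (f := fun σ => Nat.card (fixedBy (SimpleGraph V) σ)) (by simp) (mem_univ 1)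

theorem card_quotient_orbitRel_mul_factorial_le {θ : ℝ} (hθ0 : 0 ≤ θ) (hθ : θ ^ 4 = 1 / 2)
    (hsmall : (Fintype.card V : ℝ) ^ 2 * θ ^ (Fintype.card V - 2) ≤ 1) :
    (Nat.card (Quotient (orbitRel (Perm V) (SimpleGraph V))) * (Fintype.card V).factorial : ℝ)
      ≤ 2 ^ (Fintype.card V).choose 2 *
        (1 + Fintype.card V * ((Fintype.card V : ℝ) ^ 2 * θ ^ (Fintype.card V - 2)) ^ 2) := by
  set n := Fintype.card V
  have hsum := Perm.sum_pow_card_support_le (α := V) (by positivity) hsmall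
  calc (Nat.card (Quotient (orbitRel (Perm V) (SimpleGraph V))) * n.factorial : ℝ)
      = ∑ σ : Perm V, (Nat.card (fixedBy (SimpleGraph V) σ) : ℝ) := by
        exact_mod_cast card_quotient_orbitRel_mul_factorial
    _ = (Nat.card (fixedBy (SimpleGraph V) (1 : Perm V)) : ℝ)
          + ∑ σ ∈ univ.erase 1, (Nat.card (fixedBy (SimpleGraph V) σ) : ℝ) :=
        (add_sum_erase _ _ (mem_univ 1)).symm
    _ ≤ 2 ^ n.choose 2 * θ ^ ((n - 2) * #(1 : Perm V).support)
          + ∑ σ ∈ univ.erase 1, 2 ^ n.choose 2 * θ ^ ((n - 2) * #σ.support) :=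
        add_le_add (card_fixedBy_le hθ0 hθ 1) (sum_le_sum fun σ _ => card_fixedBy_le hθ0 hθ σ)
    _ ≤ _ := by
        simp only [Perm.support_one, card_empty, mul_zero, pow_zero, mul_one, ← mul_sum, pow_mul]
        rw [mul_add, mul_one]
        exact add_le_add_right (mul_le_mul_of_nonneg_left hsum (by positivity)) _

end SimpleGraph

theorem tendsto_mul_sq_mul_pow_sub_two {θ : ℝ} (hθ0 : 0 < θ) (hθ1 : θ < 1) :
    Tendsto (fun n : ℕ => (n : ℝ) * ((n : ℝ) ^ 2 * θ ^ (n - 2)) ^ 2) atTop (𝓝 0) := by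
  have h := (tendsto_pow_const_mul_const_pow_of_abs_lt_one 5
    (show |θ ^ 2| < 1 by rw [abs_of_pos (by positivity)]; nlinarith)).const_mul (θ ^ 4)⁻¹
  rw [mul_zero] at h
  refine h.congr' ((eventually_ge_atTop 2).mono fun n hn => ?_)
  obtain ⟨k, rfl⟩ := Nat.exists_eq_add_of_le' hn
  simp only [Nat.add_sub_cancel, Nat.cast_add]
  field_simp
  ring

theorem graphSetoid_eq_orbitRel (n : ℕ) :
    graphSetoid n = orbitRel (Perm (Fin n)) (SimpleGraph (Fin n)) :=
  Setoid.ext fun _ _ => nonempty_iso_iff_mem_orbit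

/-- P\'olya; Wright: the number of isomorphism classes of graphs on `n` vertices is
`(1 + o(1)) ⬝ 2^(n choose 2) / n!`. -/
theorem numberOfGraphs_asymptotic (ε : ℝ) (hε : 0 < ε) :
    ∃ n₀ : ℕ, ∀ n ≥ n₀,
      (1 - ε) * ((2 : ℝ) ^ (n.choose 2) / n.factorial)
        ≤ (Nat.card (Quotient (graphSetoid n)) : ℝ) ∧
      (Nat.card (Quotient (graphSetoid n)) : ℝ)
        ≤ (1 + ε) * ((2 : ℝ) ^ (n.choose 2) / n.factorial) := by
  obtain ⟨θ, hθ0, hθ⟩ : ∃ θ : ℝ, 0 < θ ∧ θ ^ 4 = 1 / 2 :=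
    ⟨(1 / 2) ^ ((4 : ℕ)⁻¹ : ℝ), by positivity,
      Real.rpow_inv_natCast_pow (by norm_num) four_ne_zero⟩
  have hθ1 : θ < 1 := (pow_lt_one_iff_of_nonneg hθ0.le four_ne_zero).mp (by rw [hθ]; norm_num)
  obtain ⟨n₀, hn₀⟩ := eventually_atTop.mp
    (((tendsto_mul_sq_mul_pow_sub_two hθ0 hθ1).eventually (ge_mem_nhds (lt_min hε one_pos))).and
      (eventually_ge_atTop 1))
  refine ⟨n₀, fun n hn => ?_⟩
  obtain ⟨herror, hn1⟩ := hn₀ n hn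
  set x := (n : ℝ) ^ 2 * θ ^ (n - 2)
  have hx : x ≤ 1 := by
    have : x ^ 2 ≤ 1 := le_trans (le_mul_of_one_le_left (sq_nonneg x) (by exact_mod_cast hn1))
      (herror.trans (min_le_right _ _))
    exact (pow_le_one_iff_of_nonneg (by positivity) two_ne_zero).mp this
  have hfact : (0 : ℝ) < n.factorial := by exact_mod_cast n.factorial_pos
  have hlow := two_pow_le_card_quotient_orbitRel_mul_factorial (V := Fin n)
  have hup := card_quotient_orbitRel_mul_factorial_le (V := Fin n) hθ0.le hθ
    (by simpa only [Fintype.card_fin] using hx)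
  simp only [Fintype.card_fin] at hlow hup
  rw [graphSetoid_eq_orbitRel]
  constructor
  · calc (1 - ε) * ((2 : ℝ) ^ (n.choose 2) / n.factorial)
        ≤ (2 : ℝ) ^ (n.choose 2) / n.factorial :=
          mul_le_of_le_one_left (by positivity) (by linarith)
      _ ≤ _ := (div_le_iff₀ hfact).mpr (by exact_mod_cast hlow)
  · rw [mul_div_assoc', le_div_iff₀ hfact]
    calc _ ≤ 2 ^ n.choose 2 * (1 + n * x ^ 2) := hup
      _ ≤ 2 ^ n.choose 2 * (1 + ε) := by gcongr; exact herror.trans (min_le_left _ _)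
      _ = _ := mul_comm _ _
end

section
/- Let k be a positive integer. There exists n₀ such that for all n ≥ n₀ the following holds. Let F be a graph on n vertices and let B' be a set of vertices of F, each of degree at most k in F, with |B'| ≥ n / log n. Then there exist an integer D with 1 ≤ D ≤ 6^k and a set T ⊆ B' with |T| ≥ n / (log n)^D such that for every vertex v of F not in T, either T ⊆ N_F(v) or |N_F(v) ∩ T| < n / (log n)^{6D}. -/
/-!
Shrink `T` greedily, starting from `T = B'`: as long as some vertex `v ∉ T` is adjacent to a
large part of `T` but not to all of it, replace `T` by `N(v) ∩ T`. The vertices `v` picked so far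
are distinct and all adjacent to every vertex of the current `T`. After `k` rounds they fill the
whole neighbourhood of each vertex of `T` (degree at most `k`), so every vertex with a neighbour
in `T` is one of them and hence adjacent to all of `T`. With thresholds `n / (log n)^(6^i)`, the
round at which the process stops gives `D = 6^i`.
-/

namespace SimpleGraph

variable {V : Type*} (F : SimpleGraph V)

def IsHomogeneousSet (T : Set V) (θ : ℝ) : Prop :=
  ∀ v ∉ T, T ⊆ F.neighborSet v ∨ ((F.neighborSet v ∩ T).ncard : ℝ) < θ

theorem subset_neighborSet_or_disjoint_of_common_neighbors [Finite V] {T : Set V}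
    (S : Finset V) (hS : ∀ v ∈ S, T ⊆ F.neighborSet v)
    (hdeg : ∀ u ∈ T, (F.neighborSet u).ncard ≤ S.card) (v : V) :
    T ⊆ F.neighborSet v ∨ Disjoint (F.neighborSet v) T := by
  refine or_iff_not_imp_right.mpr fun hvT => ?_
  obtain ⟨u, huv, huT⟩ := Set.not_disjoint_iff.mp hvT
  have hS_eq : (S : Set V) = F.neighborSet u :=
    Set.eq_of_subset_of_ncard_le (fun w hw => (F.mem_neighborSet u w).mpr (hS w hw huT).symm)
      (by simpa using hdeg u huT) (Set.toFinite _)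
  have hvS : v ∈ (S : Set V) := hS_eq ▸ (F.mem_neighborSet u v).mpr huv.symm
  exact hS v hvS

theorem isHomogeneousSet_of_common_neighbors [Finite V] {T : Set V} {θ : ℝ} (hθ : 0 < θ)
    (S : Finset V) (hS : ∀ v ∈ S, T ⊆ F.neighborSet v)
    (hdeg : ∀ u ∈ T, (F.neighborSet u).ncard ≤ S.card) : F.IsHomogeneousSet T θ := by
  intro v _
  refine (F.subset_neighborSet_or_disjoint_of_common_neighbors S hS hdeg v).imp_right
    fun hdisj => ?_
  simpa [Set.disjoint_iff_inter_eq_empty.mp hdisj] using hθ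

theorem exists_isHomogeneousSet_or_common_neighbors (θ : ℕ → ℝ) {B : Set V}
    (hB : θ 0 ≤ B.ncard) (i : ℕ) :
    (∃ j < i, ∃ T ⊆ B, θ j ≤ T.ncard ∧ F.IsHomogeneousSet T (θ (j + 1))) ∨
      ∃ T ⊆ B, ∃ S : Finset V, S.card = i ∧ (∀ v ∈ S, T ⊆ F.neighborSet v) ∧
        θ i ≤ T.ncard := by
  classical
  induction i with
  | zero => exact .inr ⟨B, subset_rfl, ∅, rfl, by simp, hB⟩
  | succ i ih =>
    obtain ⟨j, hji, hstop⟩ | ⟨T, hTB, S, hScard, hS, hTcard⟩ := ih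
    · exact .inl ⟨j, by omega, hstop⟩
    by_cases hhom : F.IsHomogeneousSet T (θ (i + 1))
    · exact .inl ⟨i, by omega, T, hTB, hTcard, hhom⟩
    simp only [IsHomogeneousSet, not_forall, not_or, not_lt] at hhom
    obtain ⟨v, -, hvT, hvlarge⟩ := hhom
    have hvS : v ∉ S := fun hv => hvT (hS v hv)
    refine .inr ⟨F.neighborSet v ∩ T, Set.inter_subset_right.trans hTB, insert v S,
      by rw [Finset.card_insert_of_notMem hvS, hScard], ?_, hvlarge⟩
    intro w hw
    obtain rfl | hwS := Finset.mem_insert.mp hw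
    · exact Set.inter_subset_left
    · exact Set.inter_subset_right.trans (hS w hwS)

theorem exists_isHomogeneousSet [Finite V] (k : ℕ) (θ : ℕ → ℝ) (hθ : 0 < θ (k + 1))
    {B : Set V} (hdeg : ∀ v ∈ B, (F.neighborSet v).ncard ≤ k) (hB : θ 0 ≤ B.ncard) :
    ∃ i ≤ k, ∃ T ⊆ B, θ i ≤ T.ncard ∧ F.IsHomogeneousSet T (θ (i + 1)) := by
  obtain ⟨j, hjk, hstop⟩ | ⟨T, hTB, S, hScard, hS, hTcard⟩ :=
    F.exists_isHomogeneousSet_or_common_neighbors θ hB k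
  · exact ⟨j, hjk.le, hstop⟩
  exact ⟨k, le_rfl, T, hTB, hTcard, F.isHomogeneousSet_of_common_neighbors hθ S hS
    fun u hu => hScard ▸ hdeg u (hTB hu)⟩

end SimpleGraph

theorem exists_good_set_general (k : ℕ) :
    ∃ n₀ : ℕ, ∀ n ≥ n₀, ∀ F : SimpleGraph (Fin n), ∀ B' : Set (Fin n),
      (∀ v ∈ B', (F.neighborSet v).ncard ≤ k) →
      (n : ℝ) / Real.log n ≤ (B'.ncard : ℝ) →
      ∃ D : ℕ, 1 ≤ D ∧ D ≤ 6 ^ k ∧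
        ∃ T ⊆ B', (n : ℝ) / (Real.log n) ^ D ≤ (T.ncard : ℝ) ∧
          ∀ v ∉ T, T ⊆ F.neighborSet v ∨
            ((F.neighborSet v ∩ T).ncard : ℝ) < (n : ℝ) / (Real.log n) ^ (6 * D) := by
  refine ⟨2, fun n hn F B' hdeg hB => ?_⟩
  have hn : (2 : ℝ) ≤ n := by exact_mod_cast hn
  have hlog : 0 < Real.log n := Real.log_pos (by linarith)
  obtain ⟨i, hik, T, hTB, hTcard, hhom⟩ :=
    F.exists_isHomogeneousSet k (fun i => n / Real.log n ^ 6 ^ i) (by positivity) hdeg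
      (by simpa using hB)
  refine ⟨6 ^ i, Nat.one_le_pow _ _ (by norm_num), Nat.pow_le_pow_right (by norm_num) hik,
    T, hTB, hTcard, ?_⟩
  rw [pow_succ'] at hhom
  exact hhom

/-- Claim: given a graph `F` on `n` vertices and a set `B'` of at least `n / log n` vertices
of degree at most `k`, there are `1 ≤ D ≤ 6^k` and `T ⊆ B'` with `|T| ≥ n / (log n)^D` such
that every vertex `v ∉ T` satisfies `T ⊆ N_F(v)` or `|N_F(v) ∩ T| < n / (log n)^(6D)`. -/
theorem exists_good_set (k : ℕ) (hk : 0 < k) :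
    ∃ n₀ : ℕ, ∀ n ≥ n₀, ∀ F : SimpleGraph (Fin n), ∀ B' : Set (Fin n),
      (∀ v ∈ B', (F.neighborSet v).ncard ≤ k) →
      (n : ℝ) / Real.log n ≤ (B'.ncard : ℝ) →
      ∃ D : ℕ, 1 ≤ D ∧ D ≤ 6 ^ k ∧
        ∃ T ⊆ B', (n : ℝ) / (Real.log n) ^ D ≤ (T.ncard : ℝ) ∧
          ∀ v ∉ T, T ⊆ F.neighborSet v ∨
            ((F.neighborSet v ∩ T).ncard : ℝ) < (n : ℝ) / (Real.log n) ^ (6 * D) :=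
  exists_good_set_general k
end

section
/- Let C ≥ 1 be a constant. There exists n₀ such that for all n ≥ n₀ the following holds. Let F be a graph on n vertices with at most Cn edges, let G ∼ G(n,1/2) be a uniformly random labelled graph on n vertices, and let π : V(F) → V(G) be any fixed bijection. Then with probability at least 1 − e^{−n log n}, there exist distinct vertices x, y ∈ V(G) such that {x, y} is a π-switch. -/
/-!
Transporting `F` along `π`, a pair `{x, y}` is a switch as soon as `G` contains a certain set
`switchEdges` of at most `deg x + deg y` edges. Since `F` has at most `Cn` edges, half of the
vertices have degree at most `s = ⌈4C⌉`, and these contain an independent set `B` of size at least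
`n / (2(s+1))`. By the Erdős–Rado sunflower lemma, `B` is covered, up to `O((log n)^(s+1))`
vertices, by disjoint groups of `m ≈ c log n` vertices whose neighbourhoods form sunflowers. The
edge sets `switchEdges` of the `≈ n m / 2` pairs lying inside a group are pairwise disjoint and
have size at most `2s`, so the events that `G` contains them are independent and each has
probability at least `4^(-s)`; all of them fail with probability at most
`exp(-4^(-s) n m / 2) ≤ exp(-n log n)`.
-/

open SimpleGraph

/-- Given a bijection `π : V(F) → V(G)`, a pair of distinct vertices `{x, y}` of `G` is a
`π`-switch if `N_G(y) ⊇ π(N_F(π⁻¹x) \ N_F(π⁻¹y))` and `N_G(x) ⊇ π(N_F(π⁻¹y) \ N_F(π⁻¹x))`. -/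
def IsSwitch {α β : Type*} (F : SimpleGraph α) (G : SimpleGraph β) (π : α ≃ β)
    (x y : β) : Prop :=
  x ≠ y ∧
    (⇑π '' (F.neighborSet (π.symm x) \ F.neighborSet (π.symm y)) ⊆ G.neighborSet y) ∧
    (⇑π '' (F.neighborSet (π.symm y) \ F.neighborSet (π.symm x)) ⊆ G.neighborSet x)

open Finset
open scoped Nat

section Counting

variable {β : Type*} [Fintype β] [DecidableEq β]

theorem card_filter_subset_mul_two_pow (A : Finset β) (P : Finset β → Prop) [DecidablePred P]
    (hP : ∀ E, P (E ∪ A) ↔ P E) :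
    #{E | A ⊆ E ∧ P E} * 2 ^ #A = #{E | P E} := by
  rw [← card_powerset, ← card_product]
  refine card_nbij' (fun p => p.1 \ A ∪ p.2) (fun E => (E ∪ A, E ∩ A)) ?_ ?_ ?_ ?_ <;>
    intro p hp <;>
    simp only [mem_coe, mem_product, mem_filter, mem_univ, true_and, mem_powerset] at hp ⊢
  · rw [← hP, union_assoc, union_eq_right.2 hp.2, sdiff_union_of_subset hp.1.1]
    exact hp.1.2
  · exact ⟨⟨subset_union_right, (hP p).2 hp⟩, inter_subset_right⟩
  · rw [union_assoc, union_eq_right.2 hp.2, sdiff_union_of_subset hp.1.1,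
      union_inter_distrib_right, sdiff_inter_self, empty_union, inter_eq_left.2 hp.2]
  · rw [union_sdiff_right, sdiff_union_inter]

theorem card_filter_forall_not_subset {ι : Type*} [DecidableEq ι] (I : Finset ι)
    (S : ι → Finset β) (hS : (I : Set ι).PairwiseDisjoint S) :
    (#{E | ∀ i ∈ I, ¬ S i ⊆ E} : ℝ) = 2 ^ Fintype.card β * ∏ i ∈ I, (1 - 2⁻¹ ^ #(S i)) := by
  induction I using Finset.induction_on with
  | empty => simp [card_univ, Fintype.card_finset]
  | insert a I ha ih =>
    have hSa : ∀ i ∈ I, Disjoint (S i) (S a) := fun i hi =>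
      hS (by simp [hi]) (by simp) (by rintro rfl; exact ha hi)
    have hQ : ∀ E, (∀ i ∈ I, ¬ S i ⊆ E ∪ S a) ↔ ∀ i ∈ I, ¬ S i ⊆ E := fun E =>
      forall₂_congr fun i hi => not_congr
        ⟨fun h => (hSa i hi).left_le_of_le_sup_right h, fun h => h.trans subset_union_left⟩
    have hsplit : #{E | S a ⊆ E ∧ ∀ i ∈ I, ¬ S i ⊆ E} + #{E | ¬ S a ⊆ E ∧ ∀ i ∈ I, ¬ S i ⊆ E}
        = #{E | ∀ i ∈ I, ¬ S i ⊆ E} := by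
      rw [← card_filter_add_card_filter_not (s := {E | ∀ i ∈ I, ¬ S i ⊆ E}) (S a ⊆ ·),
        filter_filter, filter_filter]
      simp only [and_comm]
    have hsub := card_filter_subset_mul_two_pow (S a) (fun E => ∀ i ∈ I, ¬ S i ⊆ E) hQ
    simp only [forall_mem_insert]
    rw [prod_insert ha, mul_left_comm, ← ih (hS.subset (by simp)), ← hsub, inv_pow]
    rw [← hsub] at hsplit
    have hsplit' := congrArg (Nat.cast (R := ℝ)) hsplit
    push_cast at hsplit' ⊢
    field_simp
    linear_combination hsplit'

end Counting

theorem prod_one_sub_inv_two_pow_le_exp {ι : Type*} (I : Finset ι) (f : ι → ℕ) {k : ℕ}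
    (hk : ∀ i ∈ I, f i ≤ k) :
    ∏ i ∈ I, (1 - (2 : ℝ)⁻¹ ^ f i) ≤ Real.exp (-(#I / 2 ^ k)) := by
  calc ∏ i ∈ I, (1 - (2 : ℝ)⁻¹ ^ f i) ≤ ∏ _i ∈ I, Real.exp (-(2 ^ k)⁻¹) := by
        refine prod_le_prod (fun i _ => sub_nonneg.2 (pow_le_one₀ (by norm_num) (by norm_num)))
          fun i hi => ?_
        calc 1 - (2 : ℝ)⁻¹ ^ f i ≤ 1 - (2 ^ k)⁻¹ := by
              rw [← inv_pow]
              linarith [pow_le_pow_of_le_one (by norm_num : (0 : ℝ) ≤ 2⁻¹) (by norm_num) (hk i hi)]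
          _ ≤ Real.exp (-(2 ^ k)⁻¹) := by linarith [Real.add_one_le_exp (-(2 ^ k : ℝ)⁻¹)]
    _ = Real.exp (-(#I / 2 ^ k)) := by
        rw [prod_const, ← Real.exp_nat_mul, div_eq_mul_inv, mul_neg]

namespace SimpleGraph

variable (V : Type*)

noncomputable def equivSetNotDiag : SimpleGraph V ≃ Set {e : Sym2 V // ¬ e.IsDiag} where
  toFun G := Subtype.val ⁻¹' G.edgeSet
  invFun E := fromEdgeSet (Subtype.val '' E)
  left_inv G := by
    ext a b
    simp only [fromEdgeSet_adj, Set.mem_image, Set.mem_preimage]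
    exact ⟨fun ⟨⟨e, he, hab⟩, _⟩ => by rwa [hab] at he,
      fun h => ⟨⟨⟨s(a, b), by simpa using h.ne⟩, G.mem_edgeSet.2 h, rfl⟩, h.ne⟩⟩
  right_inv E := by
    ext e
    simp [e.2]

variable {V} in
@[simp]
theorem mem_equivSetNotDiag {G : SimpleGraph V} {e : {e : Sym2 V // ¬ e.IsDiag}} :
    e ∈ equivSetNotDiag V G ↔ e.1 ∈ G.edgeSet := Iff.rfl

variable [Fintype V] [DecidableEq V]

theorem card_eq_two_pow_choose_two :
    Fintype.card (SimpleGraph V) = 2 ^ (Fintype.card V).choose 2 := by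
  rw [Fintype.card_congr ((equivSetNotDiag V).trans Fintype.finsetEquivSet.symm),
    Fintype.card_finset, Sym2.card_subtype_not_diag]

variable {V}

theorem card_forall_not_subset_edgeSet_le {ι : Type*} [DecidableEq ι] (I : Finset ι)
    (S : ι → Finset (Sym2 V)) (hdiag : ∀ i ∈ I, ∀ e ∈ S i, ¬ e.IsDiag)
    (hS : (I : Set ι).PairwiseDisjoint S) {k : ℕ} (hk : ∀ i ∈ I, #(S i) ≤ k) :
    (Nat.card {G : SimpleGraph V // ∀ i ∈ I, ¬ (S i : Set (Sym2 V)) ⊆ G.edgeSet} : ℝ) ≤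
      2 ^ (Fintype.card V).choose 2 * Real.exp (-(#I / 2 ^ k)) := by
  classical
  let T i := (S i).subtype fun e => ¬ e.IsDiag
  have hT : ∀ G, (∀ i ∈ I, ¬ (S i : Set (Sym2 V)) ⊆ G.edgeSet) ↔
      ∀ i ∈ I, ¬ T i ⊆ (equivSetNotDiag V G).toFinset := by
    refine fun G => forall₂_congr fun i hi => not_congr ⟨fun h e he => ?_, fun h e he => ?_⟩
    · simpa using h (mem_subtype.1 he)
    · simpa using h ((mem_subtype (a := ⟨e, hdiag i hi e he⟩)).2 he)
  have hTdisj : (I : Set ι).PairwiseDisjoint T := fun i hi j hj hij =>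
    show Disjoint (T i) (T j) from Finset.disjoint_left.2 fun e hei hej =>
      Finset.disjoint_left.1 (hS hi hj hij) (mem_subtype.1 hei) (mem_subtype.1 hej)
  have hTcard : ∀ i ∈ I, #(T i) = #(S i) := fun i hi => by
    rw [card_subtype, filter_true_of_mem (hdiag i hi)]
  rw [Nat.card_congr (((equivSetNotDiag V).trans Fintype.finsetEquivSet.symm).subtypeEquiv
      (q := fun E => ∀ i ∈ I, ¬ T i ⊆ E) fun G => by simpa using hT G),
    Nat.card_eq_fintype_card, Fintype.card_subtype,
    card_filter_forall_not_subset I T hTdisj, Sym2.card_subtype_not_diag]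
  gcongr
  exact prod_one_sub_inv_two_pow_le_exp I _ fun i hi => (hTcard i hi).trans_le (hk i hi)

end SimpleGraph

theorem Finset.exists_subset_pairwise_not_rel {V : Type*} [DecidableEq V] (r : V → V → Prop)
    [DecidableRel r] (hr : ∀ u v, r u v → r v u) {d : ℕ} (A : Finset V)
    (hd : ∀ v ∈ A, #{u ∈ A | r v u} ≤ d) :
    ∃ B ⊆ A, #A ≤ (d + 1) * #B ∧ (B : Set V).Pairwise fun u v => ¬ r u v := by
  induction A using Finset.strongInduction with
  | H A ih =>
    obtain rfl | ⟨v, hv⟩ := A.eq_empty_or_nonempty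
    · exact ⟨∅, by simp⟩
    set A' := {u ∈ A | u ≠ v ∧ ¬ r v u}
    obtain ⟨B, hBA', hcard, hB⟩ := ih A' (filter_ssubset.2 ⟨v, hv, by simp⟩) fun u hu =>
      (card_le_card (filter_subset_filter _ (filter_subset _ _))).trans (hd u (mem_filter.1 hu).1)
    have hvB : v ∉ B := fun h => (mem_filter.1 (hBA' h)).2.1 rfl
    have hrest : #{u ∈ A | ¬ (u ≠ v ∧ ¬ r v u)} ≤ d + 1 := by
      calc #{u ∈ A | ¬ (u ≠ v ∧ ¬ r v u)} ≤ #(insert v {u ∈ A | r v u}) := by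
            refine card_le_card fun u hu => ?_
            simp only [mem_filter, not_and_not_right, mem_insert] at hu ⊢
            tauto
        _ ≤ d + 1 := (card_insert_le _ _).trans (by simpa using hd v hv)
    refine ⟨insert v B, insert_subset hv (hBA'.trans (filter_subset _ _)), ?_, ?_⟩
    · rw [card_insert_of_notMem hvB, ← card_filter_add_card_filter_not (s := A)
        (fun u => u ≠ v ∧ ¬ r v u)]
      linarith
    · rw [coe_insert, Set.pairwise_insert]
      refine ⟨hB, fun u hu _ => ?_⟩
      have hvu := (mem_filter.1 (hBA' hu)).2.2
      exact ⟨hvu, mt (hr u v) hvu⟩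

section Sunflower

variable {V W : Type*} [DecidableEq V] [DecidableEq W]

-- The usual sunflower condition, without naming the kernel; the sets `f v` may repeat.
def IsSunflower (f : V → Finset W) (T : Finset V) : Prop :=
  (T : Set V).Pairwise fun u v => ∀ w ∈ T, f u ∩ f v ⊆ f w

theorem card_filter_not_disjoint_le (f : V → Finset W) (A : Finset V) {t : ℕ}
    (ht : ∀ z, #{v ∈ A | z ∈ f v} ≤ t) (v : V) :
    #{u ∈ A | ¬ Disjoint (f v) (f u)} ≤ #(f v) * t := by
  calc #{u ∈ A | ¬ Disjoint (f v) (f u)} ≤ #((f v).biUnion fun z => {u ∈ A | z ∈ f u}) := by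
        refine card_le_card fun u hu => ?_
        obtain ⟨huA, hvu⟩ := mem_filter.1 hu
        obtain ⟨z, hzv, hzu⟩ := not_disjoint_iff.1 hvu
        exact mem_biUnion.2 ⟨z, hzv, mem_filter.2 ⟨huA, hzu⟩⟩
    _ ≤ ∑ z ∈ f v, #{u ∈ A | z ∈ f u} := card_biUnion_le
    _ ≤ #(f v) * t := by simpa using sum_le_card_nsmul _ _ _ fun z _ => ht z

theorem exists_isSunflower (f : V → Finset W) {s m : ℕ} {A : Finset V}
    (hf : ∀ v ∈ A, #(f v) ≤ s) (hA : (s + 1)! * m ^ (s + 1) ≤ #A) :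
    ∃ T ⊆ A, #T = m ∧ IsSunflower f T := by
  induction s generalizing A f with
  | zero =>
    obtain ⟨T, hTA, hT⟩ := exists_subset_card_eq (s := A) (n := m) (by simpa using hA)
    refine ⟨T, hTA, hT, fun u hu v _ _ w _ => ?_⟩
    simp [card_eq_zero.1 (Nat.le_zero.1 (hf u (hTA hu)))]
  | succ s ih =>
    set t := (s + 1)! * m ^ (s + 1)
    by_cases hz : ∃ z, t ≤ #{v ∈ A | z ∈ f v}
    · obtain ⟨z, hz⟩ := hz
      obtain ⟨T, hTA, hT, hsun⟩ := ih (fun v => (f v).erase z) (fun v hv => by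
        rw [card_erase_of_mem (mem_filter.1 hv).2]
        have := hf v (mem_filter.1 hv).1
        omega) hz
      refine ⟨T, hTA.trans (filter_subset _ _), hT, fun u hu v hv huv w hw a ha => ?_⟩
      by_cases haz : a = z
      · exact haz ▸ (mem_filter.1 (hTA hw)).2
      · exact mem_of_mem_erase (hsun hu hv huv w hw (by simpa [haz] using ha))
    · push Not at hz
      obtain ⟨B, hBA, hcard, hB⟩ := exists_subset_pairwise_not_rel
        (fun u v => ¬ Disjoint (f u) (f v)) (fun u v h h' => h h'.symm) (d := (s + 1) * t) A
        fun v hv => (card_filter_not_disjoint_le f A (fun z => (hz z).le) v).trans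
          (Nat.mul_le_mul_right _ (hf v hv))
      have hm : m ≤ #B := by
        by_contra! h
        have hm0 : 0 < m := by omega
        have ht : 1 ≤ t := Nat.one_le_iff_ne_zero.2 (by positivity)
        have hfac : (s + 1 + 1)! * m ^ (s + 1 + 1) = (s + 2) * t * m := by
          rw [Nat.factorial_succ, pow_succ]; ring
        rw [hfac] at hA
        nlinarith [Nat.mul_le_mul_left ((s + 1) * t + 1) (Nat.succ_le_of_lt h)]
      obtain ⟨T, hTB, hT⟩ := exists_subset_card_eq hm
      refine ⟨T, hTB.trans hBA, hT, fun u hu v hv huv w _ => ?_⟩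
      rw [disjoint_iff_inter_eq_empty.1 (not_not.1 (hB (hTB hu) (hTB hv) huv))]
      exact empty_subset _

theorem exists_pairwiseDisjoint_isSunflower (f : V → Finset W) {s m : ℕ} (hm : 0 < m)
    (A : Finset V) (hf : ∀ v ∈ A, #(f v) ≤ s) :
    ∃ 𝒯 : Finset (Finset V), (∀ T ∈ 𝒯, T ⊆ A ∧ #T = m ∧ IsSunflower f T) ∧
      (𝒯 : Set (Finset V)).PairwiseDisjoint id ∧ #A ≤ m * #𝒯 + (s + 1)! * m ^ (s + 1) := by
  induction A using Finset.strongInduction with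
  | H A ih =>
    by_cases hA : #A < (s + 1)! * m ^ (s + 1)
    · exact ⟨∅, by simp, by simp, by omega⟩
    obtain ⟨T, hTA, hT, hsun⟩ := exists_isSunflower f hf (not_lt.1 hA)
    have hTne : T.Nonempty := card_pos.1 (hT ▸ hm)
    obtain ⟨𝒯, h𝒯, hdisj, hcard⟩ := ih (A \ T) (sdiff_ssubset hTA hTne) fun v hv =>
      hf v (mem_sdiff.1 hv).1
    have hT𝒯 : ∀ T' ∈ 𝒯, Disjoint T T' := fun T' hT' =>
      disjoint_sdiff.mono_right (h𝒯 T' hT').1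
    have hT_notMem : T ∉ 𝒯 := fun h => hTne.ne_empty (disjoint_self.1 (hT𝒯 T h))
    refine ⟨insert T 𝒯, ?_, ?_, ?_⟩
    · simp only [mem_insert, forall_eq_or_imp]
      exact ⟨⟨hTA, hT, hsun⟩, fun T' hT' => ⟨(h𝒯 T' hT').1.trans sdiff_subset, (h𝒯 T' hT').2⟩⟩
    · rw [coe_insert]
      exact hdisj.insert fun T' hT' _ => hT𝒯 T' hT'
    · rw [card_insert_of_notMem hT_notMem, ← card_sdiff_add_card_eq_card hTA, hT]
      linarith

end Sunflower

section IncreasingPairs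

variable {V : Type*} [LinearOrder V]

def increasingPairs (T : Finset V) : Finset (V × V) := {p ∈ T.offDiag | p.1 < p.2}

theorem mem_increasingPairs {T : Finset V} {p : V × V} :
    p ∈ increasingPairs T ↔ p.1 ∈ T ∧ p.2 ∈ T ∧ p.1 < p.2 := by
  simp only [increasingPairs, mem_filter, mem_offDiag]
  exact ⟨fun ⟨⟨h1, h2, _⟩, h⟩ => ⟨h1, h2, h⟩, fun ⟨h1, h2, h⟩ => ⟨⟨h1, h2, h.ne⟩, h⟩⟩

theorem two_mul_card_increasingPairs (T : Finset V) :
    2 * #(increasingPairs T) = #T * #T - #T := by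
  have hswap : #{p ∈ T.offDiag | ¬ p.1 < p.2} = #(increasingPairs T) := by
    refine card_nbij' Prod.swap Prod.swap ?_ ?_ (fun _ _ => rfl) (fun _ _ => rfl) <;>
      rintro ⟨a, b⟩ <;> simp only [coe_filter, Set.mem_ofPred_eq, mem_offDiag,
        increasingPairs, Prod.swap_prod_mk, not_lt] <;> intro h
    · exact ⟨⟨h.1.2.1, h.1.1, h.1.2.2.symm⟩, lt_of_le_of_ne h.2 h.1.2.2.symm⟩
    · exact ⟨⟨h.1.2.1, h.1.1, h.1.2.2.symm⟩, h.2.le⟩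
  have h := card_filter_add_card_filter_not (s := T.offDiag) (fun p => p.1 < p.2)
  rw [hswap, offDiag_card] at h
  change #(increasingPairs T) + #(increasingPairs T) = _ at h
  omega

end IncreasingPairs

namespace SimpleGraph

section SwitchEdges

variable {V : Type*} [Fintype V] [DecidableEq V] (H : SimpleGraph V) [DecidableRel H.Adj]

def switchEdges (x y : V) : Finset (Sym2 V) :=
  (H.neighborFinset x \ H.neighborFinset y).image (s(y, ·)) ∪
    (H.neighborFinset y \ H.neighborFinset x).image (s(x, ·))

variable {H}

theorem mem_switchEdges {x y : V} {e : Sym2 V} :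
    e ∈ switchEdges H x y ↔ ∃ z, (H.Adj x z ∧ ¬ H.Adj y z ∧ s(y, z) = e) ∨
      (H.Adj y z ∧ ¬ H.Adj x z ∧ s(x, z) = e) := by
  simp only [switchEdges, mem_union, mem_image, mem_sdiff, mem_neighborFinset, and_assoc,
    ← exists_or]

theorem isSwitch_of_subset_edgeSet {α : Type*} {F : SimpleGraph α} {G : SimpleGraph V}
    {π : α ≃ V} [DecidableRel (F.comap π.symm).Adj] {x y : V} (hxy : x ≠ y)
    (h : (switchEdges (F.comap π.symm) x y : Set (Sym2 V)) ⊆ G.edgeSet) :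
    IsSwitch F G π x y := by
  refine ⟨hxy, ?_, ?_⟩ <;> rintro _ ⟨z, hz, rfl⟩ <;> rw [mem_neighborSet, ← mem_edgeSet] <;>
    apply h <;> simp only [mem_coe, mem_switchEdges, comap_adj] <;>
    exact ⟨π z, by simp_all⟩

theorem card_switchEdges_le (x y : V) : #(switchEdges H x y) ≤ H.degree x + H.degree y := by
  rw [← card_neighborFinset_eq_degree, ← card_neighborFinset_eq_degree]
  exact (card_union_le _ _).trans (add_le_add (card_image_le.trans (card_le_card sdiff_subset))
    (card_image_le.trans (card_le_card sdiff_subset)))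

theorem not_isDiag_of_mem_switchEdges {x y : V} (hxy : ¬ H.Adj x y) {e : Sym2 V}
    (he : e ∈ switchEdges H x y) : ¬ e.IsDiag := by
  obtain ⟨z, ⟨hxz, -, rfl⟩ | ⟨hyz, -, rfl⟩⟩ := mem_switchEdges.1 he
  · exact fun h : y = z => hxy (h ▸ hxz)
  · exact fun h : x = z => hxy (h ▸ hyz).symm

theorem exists_of_mem_switchEdges {x y : V} {e : Sym2 V} (he : e ∈ switchEdges H x y) :
    ∃ w a z, s(w, a) = s(x, y) ∧ e = s(w, z) ∧ H.Adj a z ∧ ¬ H.Adj w z := by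
  obtain ⟨z, ⟨hxz, hyz, rfl⟩ | ⟨hyz, hxz, rfl⟩⟩ := mem_switchEdges.1 he
  exacts [⟨y, x, z, Sym2.eq_swap, rfl, hxz, hyz⟩, ⟨x, y, z, rfl, rfl, hyz, hxz⟩]

end SwitchEdges

section PairwiseDisjoint

variable {V : Type*} [LinearOrder V] [Fintype V] {H : SimpleGraph V} [DecidableRel H.Adj]

theorem pairwiseDisjoint_switchEdges {B : Finset V}
    (hB : (B : Set V).Pairwise fun u v => ¬ H.Adj u v) {𝒯 : Finset (Finset V)}
    (h𝒯 : ∀ T ∈ 𝒯, T ⊆ B ∧ IsSunflower (fun v => H.neighborFinset v) T)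
    (hdisj : (𝒯 : Set (Finset V)).PairwiseDisjoint id) :
    (↑(𝒯.biUnion increasingPairs) : Set (V × V)).PairwiseDisjoint
      fun p => switchEdges H p.1 p.2 := by
  have mem_of_eq : ∀ {T : Finset V} {p : V × V} {u v : V}, p ∈ increasingPairs T →
      s(u, v) = s(p.1, p.2) → u ∈ T ∧ v ∈ T := fun hp h => by
    obtain ⟨h1, h2, -⟩ := mem_increasingPairs.1 hp
    rcases Sym2.eq_iff.1 h with ⟨rfl, rfl⟩ | ⟨rfl, rfl⟩
    exacts [⟨h1, h2⟩, ⟨h2, h1⟩]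
  have notMem : ∀ {u z : V}, u ∈ B → H.Adj u z → z ∉ B := fun hu huz hz => hB hu hz huz.ne huz
  -- A common edge `s(w, z)` has `w` in both pairs and `z ∉ B`, so the pairs lie in the same
  -- sunflower and share `w`; their other vertices both see `z` while `w` does not.
  intro p hp q hq hpq
  obtain ⟨T, hT, hpT⟩ := mem_biUnion.1 hp
  obtain ⟨T', hT', hqT'⟩ := mem_biUnion.1 hq
  refine Finset.disjoint_left.2 fun e hep heq => ?_
  obtain ⟨w, a, z, hwa, rfl, haz, hwz⟩ := exists_of_mem_switchEdges hep
  obtain ⟨w', a', z', hwa', he, haz', -⟩ := exists_of_mem_switchEdges heq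
  obtain ⟨hwT, haT⟩ := mem_of_eq hpT hwa
  obtain ⟨hw'T', ha'T'⟩ := mem_of_eq hqT' hwa'
  obtain ⟨rfl, rfl⟩ : w = w' ∧ z = z' := by
    rcases Sym2.eq_iff.1 he with h | ⟨rfl, -⟩
    exacts [h, absurd ((h𝒯 T hT).1 hwT) (notMem ((h𝒯 T' hT').1 ha'T') haz')]
  obtain rfl : T = T' := by
    by_contra hTT'
    exact Finset.disjoint_left.1 (hdisj hT hT' hTT') hwT hw'T'
  rcases eq_or_ne a a' with rfl | haa
  · apply hpq
    have hp' := (mem_increasingPairs.1 hpT).2.2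
    have hq' := (mem_increasingPairs.1 hqT').2.2
    rcases Sym2.eq_iff.1 (hwa.symm.trans hwa') with ⟨h1, h2⟩ | ⟨h1, h2⟩
    · exact Prod.ext h1 h2
    · exact absurd hq' (h1 ▸ h2 ▸ hp'.not_gt)
  · have hz := (h𝒯 T hT).2 haT ha'T' haa w hwT (mem_inter.2 ⟨(H.mem_neighborFinset a z).2 haz,
      (H.mem_neighborFinset a' z).2 haz'⟩)
    exact hwz ((H.mem_neighborFinset w z).1 hz)

end PairwiseDisjoint

theorem card_le_two_mul_card_degree_le {V : Type*} [Fintype V] (H : SimpleGraph V)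
    [DecidableRel H.Adj] {s : ℕ} (hH : 4 * #H.edgeFinset ≤ (s + 1) * Fintype.card V) :
    Fintype.card V ≤ 2 * #{v | H.degree v ≤ s} := by
  have hsplit := card_filter_add_card_filter_not (s := univ) (H.degree · ≤ s)
  have hhigh : #{v | ¬ H.degree v ≤ s} * (s + 1) ≤ 2 * #H.edgeFinset := by
    rw [← sum_degrees_eq_twice_card_edges]
    calc #{v | ¬ H.degree v ≤ s} * (s + 1) ≤ ∑ v ∈ {v | ¬ H.degree v ≤ s}, H.degree v := by
          simpa using card_nsmul_le_sum _ _ (s + 1) fun v hv => by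
            simpa using (mem_filter.1 hv).2
      _ ≤ ∑ v, H.degree v := sum_le_sum_of_subset (subset_univ _)
  have : 2 * #{v | ¬ H.degree v ≤ s} ≤ Fintype.card V := by
    refine le_of_mul_le_mul_right (a := s + 1) ?_ s.succ_pos
    linarith
  rw [card_univ] at hsplit
  omega

theorem exists_disjoint_switchEdges {V : Type*} [Fintype V] [LinearOrder V]
    (H : SimpleGraph V) [DecidableRel H.Adj] {s m : ℕ} (hm : 0 < m)
    (hH : 4 * #H.edgeFinset ≤ (s + 1) * Fintype.card V) :
    ∃ I : Finset (V × V),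
      (∀ p ∈ I, p.1 ≠ p.2 ∧ ¬ H.Adj p.1 p.2 ∧ #(switchEdges H p.1 p.2) ≤ 2 * s) ∧
      (I : Set (V × V)).PairwiseDisjoint (fun p => switchEdges H p.1 p.2) ∧
      (m - 1) * Fintype.card V ≤
        4 * (s + 1) * #I + 2 * (s + 1) * (m - 1) * ((s + 1)! * m ^ (s + 1)) := by
  obtain ⟨B, hBL, hLB, hB⟩ := exists_subset_pairwise_not_rel H.Adj (fun _ _ h => h.symm) (d := s)
    {v | H.degree v ≤ s} fun v hv => by
      refine (card_le_card fun u hu => ?_).trans ((card_neighborFinset_eq_degree H v).trans_le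
        (mem_filter.1 hv).2)
      exact (H.mem_neighborFinset v u).2 (mem_filter.1 hu).2
  have hBdeg : ∀ v ∈ B, #(H.neighborFinset v) ≤ s := fun v hv => by
    simpa using (mem_filter.1 (hBL hv)).2
  obtain ⟨𝒯, h𝒯, hdisj, hcard⟩ :=
    exists_pairwiseDisjoint_isSunflower (fun v => H.neighborFinset v) hm B hBdeg
  refine ⟨𝒯.biUnion increasingPairs, fun p hp => ?_,
    pairwiseDisjoint_switchEdges hB (fun T hT => ⟨(h𝒯 T hT).1, (h𝒯 T hT).2.2⟩) hdisj, ?_⟩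
  · obtain ⟨T, hT, hpT⟩ := mem_biUnion.1 hp
    obtain ⟨h1, h2, hlt⟩ := mem_increasingPairs.1 hpT
    have h1B := (h𝒯 T hT).1 h1
    have h2B := (h𝒯 T hT).1 h2
    refine ⟨hlt.ne, hB h1B h2B hlt.ne, (card_switchEdges_le _ _).trans ?_⟩
    rw [← card_neighborFinset_eq_degree, ← card_neighborFinset_eq_degree]
    linarith [hBdeg _ h1B, hBdeg _ h2B]
  · have hper : ∀ T ∈ 𝒯, 2 * #(increasingPairs T) = m * (m - 1) := fun T hT => by
      rw [two_mul_card_increasingPairs, (h𝒯 T hT).2.1, Nat.mul_sub_one]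
    have hpairs : 2 * #(𝒯.biUnion increasingPairs) = #𝒯 * (m * (m - 1)) := by
      rw [card_biUnion fun T hT T' hT' hTT' => ?_, mul_sum, sum_congr rfl hper, sum_const,
        smul_eq_mul]
      refine Finset.disjoint_left.2 fun p hp hp' => ?_
      exact Finset.disjoint_left.1 (hdisj hT hT' hTT') (mem_increasingPairs.1 hp).1
        (mem_increasingPairs.1 hp').1
    have hn : Fintype.card V ≤ 2 * ((s + 1) * (m * #𝒯 + (s + 1)! * m ^ (s + 1))) :=
      calc Fintype.card V ≤ 2 * #{v | H.degree v ≤ s} := H.card_le_two_mul_card_degree_le hH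
        _ ≤ 2 * ((s + 1) * #B) := Nat.mul_le_mul_left 2 hLB
        _ ≤ _ := Nat.mul_le_mul_left 2 (Nat.mul_le_mul_left (s + 1) hcard)
    nlinarith [Nat.mul_le_mul_left (m - 1) hn]

end SimpleGraph

open Filter in
theorem eventually_mul_pow_ceil_log_le (a k : ℕ) {c : ℝ} (hc : 0 ≤ c) :
    ∀ᶠ n : ℕ in atTop, a * (⌈c * Real.log n⌉₊ + 1) ^ k ≤ n := by
  set K : ℝ := a * (c + 2) ^ k
  have hK : 0 ≤ K := by positivity
  have hlog : ∀ᶠ x : ℝ in atTop, 1 ≤ Real.log x := Real.tendsto_log_atTop.eventually_ge_atTop 1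
  have hpoly : ∀ᶠ x : ℝ in atTop, K * Real.log x ^ k ≤ x := by
    filter_upwards [(Real.isLittleO_pow_log_id_atTop (n := k)).bound (c := (K + 1)⁻¹)
      (by positivity), hlog, eventually_ge_atTop 0] with x hx hx1 hx0
    have hlog0 : 0 ≤ Real.log x ^ k := pow_nonneg (zero_le_one.trans hx1) k
    rw [Real.norm_of_nonneg hlog0, id, Real.norm_of_nonneg hx0, inv_mul_eq_div,
      le_div_iff₀ (by positivity)] at hx
    nlinarith
  filter_upwards [tendsto_natCast_atTop_atTop.eventually (hpoly.and hlog)] with n ⟨hn, hn1⟩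
  have hceil : (⌈c * Real.log n⌉₊ : ℝ) + 1 ≤ (c + 2) * Real.log n := by
    nlinarith [Nat.ceil_lt_add_one (mul_nonneg hc (zero_le_one.trans hn1))]
  have : (a : ℝ) * ((⌈c * Real.log n⌉₊ : ℝ) + 1) ^ k ≤ n := by
    calc (a : ℝ) * ((⌈c * Real.log n⌉₊ : ℝ) + 1) ^ k ≤ a * ((c + 2) * Real.log n) ^ k := by
          gcongr
      _ = K * Real.log n ^ k := by rw [mul_pow, mul_assoc]
      _ ≤ n := hn
  exact_mod_cast this

open Filter in
theorem eventually_card_not_exists_isSwitch_le (s : ℕ) :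
    ∀ᶠ n : ℕ in atTop, ∀ F : SimpleGraph (Fin n), 4 * F.edgeSet.ncard ≤ (s + 1) * n →
      ∀ π : Fin n ≃ Fin n,
        (Nat.card {G : SimpleGraph (Fin n) // ¬ ∃ x y, IsSwitch F G π x y} : ℝ) ≤
          2 ^ n.choose 2 * Real.exp (-(n * Real.log n)) := by
  -- Groups of `m > c log n` vertices give at least `4^s n log n` disjoint edge sets.
  set c : ℝ := 8 * (s + 1) * 4 ^ s
  filter_upwards [eventually_mul_pow_ceil_log_le (4 * (s + 1) * (s + 1)!) (s + 1)
    (by positivity : 0 ≤ c)] with n hn F hF π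
  classical
  set H := F.comap π.symm
  have hH : 4 * #H.edgeFinset ≤ (s + 1) * Fintype.card (Fin n) := by
    rwa [(Iso.comap π.symm F).card_edgeFinset_eq, Fintype.card_fin, edgeFinset,
      ← Set.ncard_eq_toFinset_card']
  set m := ⌈c * Real.log n⌉₊ + 1
  obtain ⟨I, hI, hdisj, hcount⟩ := H.exists_disjoint_switchEdges (m := m) (Nat.succ_pos _) hH
  have hIbig : 4 ^ s * (n * Real.log n) ≤ #I := by
    have hnat : ⌈c * Real.log n⌉₊ * n ≤ 8 * (s + 1) * #I := by
      rw [Fintype.card_fin, Nat.add_sub_cancel] at hcount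
      nlinarith [Nat.mul_le_mul_left ⌈c * Real.log n⌉₊ hn]
    have hreal : c * Real.log n * n ≤ 8 * (s + 1) * #I :=
      (mul_le_mul_of_nonneg_right (Nat.le_ceil _) n.cast_nonneg).trans (by exact_mod_cast hnat)
    nlinarith
  have hbad : Nat.card {G : SimpleGraph (Fin n) // ¬ ∃ x y, IsSwitch F G π x y} ≤
      Nat.card {G : SimpleGraph (Fin n) //
        ∀ p ∈ I, ¬ (switchEdges H p.1 p.2 : Set (Sym2 (Fin n))) ⊆ G.edgeSet} := by
    refine Nat.card_le_card_of_injective _ (Subtype.impEmbedding _ _ ?_).injective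
    exact fun G hG p hp hsub => hG ⟨p.1, p.2, isSwitch_of_subset_edgeSet (hI p hp).1 hsub⟩
  calc _ ≤ _ := Nat.cast_le.2 hbad
    _ ≤ 2 ^ (Fintype.card (Fin n)).choose 2 * Real.exp (-(#I / 2 ^ (2 * s))) :=
      card_forall_not_subset_edgeSet_le I _
        (fun p hp _ he => not_isDiag_of_mem_switchEdges (hI p hp).2.1 he) hdisj
        fun p hp => (hI p hp).2.2
    _ ≤ 2 ^ n.choose 2 * Real.exp (-(n * Real.log n)) := by
      rw [Fintype.card_fin, pow_mul]
      gcongr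
      rw [le_div_iff₀ (by positivity), show ((2 : ℝ) ^ 2) ^ s = 4 ^ s by norm_num]
      linarith

theorem switch_exists_whp_general (C : ℝ) :
    ∃ n₀ : ℕ, ∀ n ≥ n₀, ∀ F : SimpleGraph (Fin n),
      (F.edgeSet.ncard : ℝ) ≤ C * n →
      ∀ π : Fin n ≃ Fin n,
        1 - Real.exp (-(n * Real.log n)) ≤
          (Nat.card {G : SimpleGraph (Fin n) //
              ∃ x y : Fin n, IsSwitch F G π x y} : ℝ) / (2 : ℝ) ^ (n.choose 2) := by
  classical
  obtain ⟨n₀, hn₀⟩ := Filter.eventually_atTop.1 (eventually_card_not_exists_isSwitch_le ⌈4 * C⌉₊)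
  refine ⟨n₀, fun n hn F hF π => ?_⟩
  have hF' : 4 * F.edgeSet.ncard ≤ (⌈4 * C⌉₊ + 1) * n := by
    have h4C : 4 * C ≤ ⌈4 * C⌉₊ + 1 := (Nat.le_ceil _).trans (by linarith)
    have : (4 * F.edgeSet.ncard : ℝ) ≤ (⌈4 * C⌉₊ + 1) * n := by
      nlinarith [n.cast_nonneg (α := ℝ)]
    exact_mod_cast this
  have hbad := hn₀ n hn F hF' π
  have hcompl :=
    Fintype.card_subtype_compl fun G : SimpleGraph (Fin n) => ∃ x y, IsSwitch F G π x y
  have hle := Fintype.card_subtype_le fun G : SimpleGraph (Fin n) => ∃ x y, IsSwitch F G π x y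
  rw [card_eq_two_pow_choose_two, Fintype.card_fin] at hcompl hle
  rw [Nat.card_eq_fintype_card, hcompl, Nat.cast_sub hle] at hbad
  rw [Nat.card_eq_fintype_card, le_div_iff₀ (by positivity)]
  push_cast at hbad
  linarith

/-- If `F` has at most `Cn` edges, then for `G ∼ G(n,1/2)` and any fixed bijection `π`, with
probability at least `1 - e^(-n log n)` there is a pair of distinct vertices of `G` forming a
`π`-switch. -/
theorem switch_exists_whp (C : ℝ) (hC : 1 ≤ C) :
    ∃ n₀ : ℕ, ∀ n ≥ n₀, ∀ F : SimpleGraph (Fin n),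
      (F.edgeSet.ncard : ℝ) ≤ C * n →
      ∀ π : Fin n ≃ Fin n,
        1 - Real.exp (-(n * Real.log n)) ≤
          (Nat.card {G : SimpleGraph (Fin n) //
              ∃ x y : Fin n, IsSwitch F G π x y} : ℝ) / (2 : ℝ) ^ (n.choose 2) :=
  switch_exists_whp_general C
end
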